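/- arXiv:1311.0531 — 2 statements merged into one kernel-verified Lean document; each statement's English description precedes it below -/
import Mathlib

section
/- Let A and B be finite non-collinear subsets of ℝ², and let v be a unit vector that is not parallel to any side of [A] or of [B]. If the four sets A_{v,upp}, A_{v,low}, B_{v,upp}, B_{v,low} are all non-empty, then 2 i_{A+B} ≥ b_A + b_B − 6. -/
open scoped Pointwise Classical RealInnerProductSpace

noncomputable section

/-- The plane `ℝ²`. -/
abbrev Pt : Type := EuclideanSpace ℝ (Fin 2)

/-- `b_A`: the number of points of `A` on the frontier of the convex hull of `A`. -/
def bdryCard (A : Finset Pt) : ℕ :=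
  (A.filter fun x => x ∈ frontier (convexHull ℝ (A : Set Pt))).card

/-- `i_A`: the number of points of `A` in the interior of the convex hull of `A`. -/
def intCard (A : Finset Pt) : ℕ :=
  (A.filter fun x => x ∈ interior (convexHull ℝ (A : Set Pt))).card

/-- `u` is an exterior normal to the convex hull of `A` at `x`,
i.e. `u·x = max {u·y : y ∈ A}` (for `x ∈ A`). -/
def IsExtNormal (A : Finset Pt) (u x : Pt) : Prop :=
  ∀ y ∈ A, ⟪u, y⟫ ≤ ⟪u, x⟫

/-- `A_u`: the set of points of `A` where `u·x` is maximal. -/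
def maxSet (A : Finset Pt) (u : Pt) : Finset Pt :=
  A.filter fun x => ∀ y ∈ A, ⟪u, y⟫ ≤ ⟪u, x⟫

/-- `C` is an arithmetic progression with difference `d`. -/
def IsAP (C : Finset Pt) (d : Pt) : Prop :=
  ∃ c : Pt, C = (Finset.range C.card).image fun k => c + (k : ℝ) • d

/-- `A_{v,upp}`: points of `A` having a nonzero exterior normal, all of whose
unit exterior normals `u` satisfy `u·v > 0`. -/
def upperSet (A : Finset Pt) (v : Pt) : Finset Pt :=
  A.filter fun a => (∃ u : Pt, u ≠ 0 ∧ IsExtNormal A u a) ∧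
    ∀ u : Pt, ‖u‖ = 1 → IsExtNormal A u a → 0 < ⟪u, v⟫

/-- `A_{v,low}`: points of `A` having a nonzero exterior normal, all of whose
unit exterior normals `u` satisfy `u·v < 0`. -/
def lowerSet (A : Finset Pt) (v : Pt) : Finset Pt :=
  A.filter fun a => (∃ u : Pt, u ≠ 0 ∧ IsExtNormal A u a) ∧
    ∀ u : Pt, ‖u‖ = 1 → IsExtNormal A u a → ⟪u, v⟫ < 0

/-- The unit vector `v` is not parallel to any side of the convex hull of `A`. -/
def NotParallelToSide (v : Pt) (A : Finset Pt) : Prop :=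
  ∀ u : Pt, ‖u‖ = 1 → ⟪u, v⟫ = 0 → (maxSet A u).card ≤ 1

/-- For `v = (v₁, v₂)`, the rotated vector `w = (v₂, -v₁)`. -/
def perp (v : Pt) : Pt := (EuclideanSpace.equiv (Fin 2) ℝ).symm ![v 1, -(v 0)]

/-- `r_{v,A}`: a point of `A` where `(perp v)·x` is maximal (the rightmost point of `A`);
it is unique when `v` is not parallel to any side of the convex hull of `A`. -/
def rPt (v : Pt) (A : Finset Pt) : Pt :=
  if h : ∃ x ∈ A, ∀ y ∈ A, ⟪perp v, y⟫ ≤ ⟪perp v, x⟫ then h.choose else 0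

/-- `l_{v,A}`: a point of `A` where `(perp v)·x` is minimal (the leftmost point of `A`);
it is unique when `v` is not parallel to any side of the convex hull of `A`. -/
def lPt (v : Pt) (A : Finset Pt) : Pt :=
  if h : ∃ x ∈ A, ∀ y ∈ A, ⟪perp v, x⟫ ≤ ⟪perp v, y⟫ then h.choose else 0

/-!
Let `w = perp v`. For `a ∈ A_{v,upp}` and `b ∈ B_{v,low}` the point `a + b` lies in the interior
of `[A + B]`: an exterior normal to `[A + B]` at `a + b` would be an exterior normal to `[A]` at `a`
and to `[B]` at `b`, hence would have both positive and negative inner product with `v`.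
Two upper points of `A` with the same `w`-coordinate coincide, since a normal at either of them
points upwards. So if `a₀` is the upper point of `A` with largest `w`-coordinate and
`b₀` the lower point of `B` with smallest one, the interior points `a + b₀` and `a₀ + b` of `A + B`
are distinct except for `a₀ + b₀`, whence `|A_{v,upp}| + |B_{v,low}| ≤ i_{A+B} + 1`, and
symmetrically with `-v`. Finally, a boundary point of `A` that is neither upper nor lower has
exterior normals on both sides of `v`, so a nonnegative combination of them is a normal orthogonal
to `v`; as `v` is parallel to no side, at most two such points exist and
`b_A ≤ |A_{v,upp}| + |A_{v,low}| + 2`. Adding the four inequalities gives the claim.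
-/

open Finset

lemma affineSpan_eq_top_of_not_collinear {k V P : Type*} [DivisionRing k] [AddCommGroup V]
    [Module k V] [AddTorsor V P] [FiniteDimensional k V] (hV : Module.finrank k V = 2)
    {s : Set P} (hs : ¬ Collinear k s) : affineSpan k s = ⊤ := by
  obtain hempty | hne := s.eq_empty_or_nonempty
  · exact absurd (hempty ▸ collinear_empty k P) hs
  rw [AffineSubspace.affineSpan_eq_top_iff_vectorSpan_eq_top_of_nonempty k V P hne]
  refine Submodule.eq_top_of_finrank_eq (le_antisymm (Submodule.finrank_le _) ?_)
  rw [collinear_iff_finrank_le_one] at hs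
  omega

lemma collinear_of_forall_inner_eq {E : Type*} [NormedAddCommGroup E] [InnerProductSpace ℝ E]
    [FiniteDimensional ℝ E] (hE : Module.finrank ℝ E = 2) {s : Set E} {u : E} (hu : u ≠ 0)
    {c : ℝ} (h : ∀ y ∈ s, ⟪u, y⟫ = c) : Collinear ℝ s := by
  have hspan : vectorSpan ℝ s ≤ (ℝ ∙ u)ᗮ := by
    rw [vectorSpan_def, Submodule.span_le]
    rintro _ ⟨p, hp, q, hq, rfl⟩
    rw [SetLike.mem_coe, Submodule.mem_orthogonal_singleton_iff_inner_right]
    change ⟪u, p - q⟫ = 0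
    rw [inner_sub_right, h p hp, h q hq, sub_self]
  have horth : Module.finrank ℝ (ℝ ∙ u)ᗮ = 1 := by
    have := Submodule.finrank_add_finrank_orthogonal (ℝ ∙ u)
    rw [finrank_span_singleton hu, hE] at this
    omega
  rw [collinear_iff_finrank_le_one]
  exact horth ▸ Submodule.finrank_mono hspan

lemma Convex.exists_inner_le_of_notMem_interior {E : Type*} [NormedAddCommGroup E]
    [InnerProductSpace ℝ E] [CompleteSpace E] {K : Set E} (hK : Convex ℝ K)
    (hint : (interior K).Nonempty) {x : E} (hx : x ∉ interior K) :
    ∃ u ≠ 0, ∀ y ∈ K, ⟪u, y⟫ ≤ ⟪u, x⟫ := by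
  obtain ⟨f, hf, hle⟩ := geometric_hahn_banach_of_nonempty_interior_point hK hx hint
  refine ⟨(InnerProductSpace.toDual ℝ E).symm f, by simpa using hf, fun y hy => ?_⟩
  simpa only [InnerProductSpace.toDual_symm_apply] using hle y hy

lemma interior_convexHull_add_nonempty {E : Type*} [NormedAddCommGroup E] [NormedSpace ℝ E]
    {s t : Set E} (hs : (interior (convexHull ℝ s)).Nonempty) (ht : t.Nonempty) :
    (interior (convexHull ℝ (s + t))).Nonempty := by
  obtain ⟨x, hx⟩ := hs
  obtain ⟨y, hy⟩ := ht
  rw [convexHull_add]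
  exact ⟨x + y, interior_maximal (Set.add_subset_add_right interior_subset)
    isOpen_interior.add_right (Set.add_mem_add hx (subset_convexHull ℝ t hy))⟩

section Perp

variable {u v x y : Pt}

lemma inner_eq_coords (x y : Pt) : ⟪x, y⟫ = x 0 * y 0 + x 1 * y 1 := by
  simp [PiLp.inner_apply, RCLike.inner_apply, Fin.sum_univ_two, mul_comm]

lemma perp_apply_zero (v : Pt) : perp v 0 = v 1 := rfl

lemma perp_apply_one (v : Pt) : perp v 1 = -v 0 := rfl

lemma inner_perp_self (v : Pt) : ⟪perp v, v⟫ = 0 := by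
  rw [inner_eq_coords, perp_apply_zero, perp_apply_one]
  ring

lemma inner_perp_perp (v : Pt) : ⟪perp v, perp v⟫ = ⟪v, v⟫ := by
  simp only [inner_eq_coords, perp_apply_zero, perp_apply_one]
  ring

lemma norm_perp (v : Pt) : ‖perp v‖ = ‖v‖ := by
  rw [norm_eq_sqrt_real_inner, norm_eq_sqrt_real_inner, inner_perp_perp]

lemma inner_eq_inner_mul_add_inner_perp_mul (hv : ‖v‖ = 1) (x y : Pt) :
    ⟪x, y⟫ = ⟪v, x⟫ * ⟪v, y⟫ + ⟪perp v, x⟫ * ⟪perp v, y⟫ := by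
  have hn : v 0 * v 0 + v 1 * v 1 = 1 := by
    rw [← inner_eq_coords, real_inner_self_eq_norm_sq, hv, one_pow]
  simp only [inner_eq_coords, perp_apply_zero, perp_apply_one]
  linear_combination (-(x 0 * y 0) - x 1 * y 1) * hn

lemma eq_of_inner_eq_of_inner_perp_eq (hv : ‖v‖ = 1) (h : ⟪v, x⟫ = ⟪v, y⟫)
    (hperp : ⟪perp v, x⟫ = ⟪perp v, y⟫) : x = y := by
  rw [← sub_eq_zero, ← inner_self_eq_zero (𝕜 := ℝ), inner_eq_inner_mul_add_inner_perp_mul hv,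
    inner_sub_right, inner_sub_right, h, hperp]
  ring

lemma eq_inner_perp_smul_perp (hv : ‖v‖ = 1) (h : ⟪v, u⟫ = 0) : u = ⟪perp v, u⟫ • perp v := by
  refine eq_of_inner_eq_of_inner_perp_eq hv ?_ ?_
  · rw [h, real_inner_smul_right, real_inner_comm (perp v), inner_perp_self, mul_zero]
  · rw [real_inner_smul_right, inner_perp_perp, real_inner_self_eq_norm_sq, hv, one_pow, mul_one]

end Perp

section ExteriorNormal

variable {A B : Finset Pt} {u w v x a b : Pt}

namespace IsExtNormal

lemma smul (h : IsExtNormal A u x) {c : ℝ} (hc : 0 ≤ c) : IsExtNormal A (c • u) x :=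
  fun y hy => by
    simp only [real_inner_smul_left]
    exact mul_le_mul_of_nonneg_left (h y hy) hc

lemma of_smul {c : ℝ} (hc : 0 < c) (h : IsExtNormal A (c • u) x) : IsExtNormal A u x := by
  simpa only [smul_smul, inv_mul_cancel₀ hc.ne', one_smul] using h.smul (inv_nonneg.2 hc.le)

lemma add (hu : IsExtNormal A u x) (hw : IsExtNormal A w x) : IsExtNormal A (u + w) x :=
  fun y hy => by
    simp only [inner_add_left]
    exact add_le_add (hu y hy) (hw y hy)

lemma of_add_left (h : IsExtNormal (A + B) u (a + b)) (hb : b ∈ B) : IsExtNormal A u a :=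
  fun y hy => by simpa only [inner_add_right, add_le_add_iff_right] using h _ (add_mem_add hy hb)

lemma of_add_right (h : IsExtNormal (A + B) u (a + b)) (ha : a ∈ A) : IsExtNormal B u b :=
  fun y hy => by simpa only [inner_add_right, add_le_add_iff_left] using h _ (add_mem_add ha hy)

lemma inner_eq_of_neg (h : IsExtNormal A u x) (hneg : IsExtNormal A (-u) x) :
    ∀ y ∈ A, ⟪u, y⟫ = ⟪u, x⟫ := fun y hy =>
  le_antisymm (h y hy) (by simpa only [inner_neg_left, neg_le_neg_iff] using hneg y hy)

end IsExtNormal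

lemma interior_convexHull_nonempty (hA : ¬ Collinear ℝ (A : Set Pt)) :
    (interior (convexHull ℝ (A : Set Pt))).Nonempty :=
  interior_convexHull_nonempty_iff_affineSpan_eq_top.2
    (affineSpan_eq_top_of_not_collinear finrank_euclideanSpace_fin hA)

lemma exists_isExtNormal_of_notMem_interior
    (hint : (interior (convexHull ℝ (A : Set Pt))).Nonempty)
    (hxi : x ∉ interior (convexHull ℝ (A : Set Pt))) : ∃ u ≠ 0, IsExtNormal A u x := by
  obtain ⟨u, hu, hle⟩ := (convex_convexHull ℝ _).exists_inner_le_of_notMem_interior hint hxi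
  exact ⟨u, hu, fun y hy => hle y (subset_convexHull ℝ _ hy)⟩

/-- The witness is `⟪u₂, v⟫ • u₁ - ⟪u₁, v⟫ • u₂`; it vanishes only if `u₁` and `-u₁` are both
normals, which pins `A` to a line. -/
lemma exists_isExtNormal_inner_eq_zero (hA : ¬ Collinear ℝ (A : Set Pt)) {u₁ u₂ : Pt}
    (hu₁ : u₁ ≠ 0) (hn₁ : IsExtNormal A u₁ x) (hv₁ : ⟪u₁, v⟫ ≤ 0)
    (hu₂ : u₂ ≠ 0) (hn₂ : IsExtNormal A u₂ x) (hv₂ : 0 ≤ ⟪u₂, v⟫) :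
    ∃ u ≠ 0, IsExtNormal A u x ∧ ⟪u, v⟫ = 0 := by
  rcases hv₁.eq_or_lt with h₁ | h₁
  · exact ⟨u₁, hu₁, hn₁, h₁⟩
  rcases hv₂.eq_or_lt with h₂ | h₂
  · exact ⟨u₂, hu₂, hn₂, h₂.symm⟩
  set s := ⟪u₂, v⟫
  set r := -⟪u₁, v⟫
  refine ⟨s • u₁ + r • u₂, fun h0 => hA ?_, (hn₁.smul h₂.le).add (hn₂.smul (by linarith)), ?_⟩
  · have hneg : IsExtNormal A (-u₁) x := by
      refine IsExtNormal.of_smul h₂ ?_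
      rw [show s • -u₁ = r • u₂ by linear_combination (norm := module) -h0]
      exact hn₂.smul (by linarith)
    exact collinear_of_forall_inner_eq finrank_euclideanSpace_fin hu₁ (hn₁.inner_eq_of_neg hneg)
  · simp only [inner_add_left, real_inner_smul_left, s, r]
    ring

lemma mem_maxSet_perp_or_neg_perp (hv : ‖v‖ = 1) (hx : x ∈ A) (hu : u ≠ 0)
    (hn : IsExtNormal A u x) (huv : ⟪u, v⟫ = 0) :
    x ∈ maxSet A (perp v) ∨ x ∈ maxSet A (-perp v) := by
  have hu' := eq_inner_perp_smul_perp hv (real_inner_comm u v ▸ huv)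
  set c := ⟪perp v, u⟫
  rcases lt_trichotomy c 0 with hc | hc | hc
  · refine Or.inr (mem_filter.2 ⟨hx, IsExtNormal.of_smul (neg_pos.2 hc) ?_⟩)
    rwa [neg_smul, smul_neg, neg_neg, ← hu']
  · exact absurd (by rw [hu', hc, zero_smul]) hu
  · exact Or.inl (mem_filter.2 ⟨hx, IsExtNormal.of_smul hc (hu' ▸ hn)⟩)

end ExteriorNormal

section UpperLower

variable {A B : Finset Pt} {v a a' b : Pt}

lemma mem_upperSet_iff : a ∈ upperSet A v ↔
    a ∈ A ∧ (∃ u ≠ 0, IsExtNormal A u a) ∧ ∀ u ≠ 0, IsExtNormal A u a → 0 < ⟪u, v⟫ := by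
  rw [upperSet, mem_filter]
  refine and_congr_right fun _ => and_congr_right fun _ =>
    ⟨fun h u hu hn => ?_, fun h u hu hn => h u (by rintro rfl; simp at hu) hn⟩
  have hpos : 0 < ‖u‖⁻¹ := inv_pos.2 (norm_pos_iff.2 hu)
  have hunit : ‖‖u‖⁻¹ • u‖ = 1 := by
    rw [norm_smul, norm_inv, norm_norm, inv_mul_cancel₀ (norm_ne_zero_iff.2 hu)]
  simpa only [real_inner_smul_left, mul_pos_iff_of_pos_left hpos] using
    h _ hunit (hn.smul hpos.le)

lemma lowerSet_eq_upperSet_neg (A : Finset Pt) (v : Pt) : lowerSet A v = upperSet A (-v) := by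
  ext a
  simp only [lowerSet, upperSet, mem_filter, inner_neg_right, neg_pos]

lemma mem_lowerSet_iff : a ∈ lowerSet A v ↔
    a ∈ A ∧ (∃ u ≠ 0, IsExtNormal A u a) ∧ ∀ u ≠ 0, IsExtNormal A u a → ⟪u, v⟫ < 0 := by
  simp only [lowerSet_eq_upperSet_neg, mem_upperSet_iff, inner_neg_right, neg_pos]

lemma inner_le_of_mem_upperSet (hv : ‖v‖ = 1) (ha : a ∈ upperSet A v) (ha' : a' ∈ A)
    (hperp : ⟪perp v, a'⟫ = ⟪perp v, a⟫) : ⟪v, a'⟫ ≤ ⟪v, a⟫ := by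
  obtain ⟨-, ⟨u, hu, hn⟩, hpos⟩ := mem_upperSet_iff.1 ha
  have hle := hn a' ha'
  rw [inner_eq_inner_mul_add_inner_perp_mul hv u a', inner_eq_inner_mul_add_inner_perp_mul hv u a,
    hperp, add_le_add_iff_right] at hle
  exact le_of_mul_le_mul_left hle (real_inner_comm u v ▸ hpos u hu hn)

lemma eq_of_mem_upperSet (hv : ‖v‖ = 1) (ha : a ∈ upperSet A v) (ha' : a' ∈ upperSet A v)
    (hperp : ⟪perp v, a⟫ = ⟪perp v, a'⟫) : a = a' :=
  eq_of_inner_eq_of_inner_perp_eq hv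
    (le_antisymm (inner_le_of_mem_upperSet hv ha' (mem_filter.1 ha).1 hperp)
      (inner_le_of_mem_upperSet hv ha (mem_filter.1 ha').1 hperp.symm)) hperp

lemma add_mem_interior_of_mem_upperSet_of_mem_lowerSet
    (hint : (interior (convexHull ℝ ((A + B : Finset Pt) : Set Pt))).Nonempty)
    (ha : a ∈ upperSet A v) (hb : b ∈ lowerSet B v) :
    a + b ∈ interior (convexHull ℝ ((A + B : Finset Pt) : Set Pt)) := by
  obtain ⟨haA, -, hposA⟩ := mem_upperSet_iff.1 ha
  obtain ⟨hbB, -, hnegB⟩ := mem_lowerSet_iff.1 hb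
  by_contra hab
  obtain ⟨u, hu, hn⟩ := exists_isExtNormal_of_notMem_interior hint hab
  linarith [hposA u hu (hn.of_add_left hbB), hnegB u hu (hn.of_add_right haA)]

lemma card_upperSet_add_card_lowerSet_le (hv : ‖v‖ = 1)
    (hint : (interior (convexHull ℝ ((A + B : Finset Pt) : Set Pt))).Nonempty)
    (hA : (upperSet A v).Nonempty) (hB : (lowerSet B v).Nonempty) :
    #(upperSet A v) + #(lowerSet B v) ≤ intCard (A + B) + 1 := by
  obtain ⟨a₀, ha₀, ha₀max⟩ := exists_max_image (upperSet A v) (fun a => ⟪perp v, a⟫) hA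
  obtain ⟨b₀, hb₀, hb₀min⟩ := exists_min_image (lowerSet B v) (fun b => ⟪perp v, b⟫) hB
  set S₁ := (upperSet A v).image (· + b₀)
  set S₂ := (lowerSet B v).image (a₀ + ·)
  have hsub : S₁ ∪ S₂ ⊆ (A + B).filter
      (fun x => x ∈ interior (convexHull ℝ ((A + B : Finset Pt) : Set Pt))) := by
    simp only [union_subset_iff, image_subset_iff, mem_filter, S₁, S₂]
    refine ⟨fun a ha => ⟨add_mem_add (mem_filter.1 ha).1 (mem_filter.1 hb₀).1, ?_⟩,
      fun b hb => ⟨add_mem_add (mem_filter.1 ha₀).1 (mem_filter.1 hb).1, ?_⟩⟩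
    · exact add_mem_interior_of_mem_upperSet_of_mem_lowerSet hint ha hb₀
    · exact add_mem_interior_of_mem_upperSet_of_mem_lowerSet hint ha₀ hb
  have hinter : S₁ ∩ S₂ ⊆ {a₀ + b₀} := by
    intro x hx
    obtain ⟨⟨a, ha, rfl⟩, ⟨b, hb, hab⟩⟩ := And.imp mem_image.1 mem_image.1 (mem_inter.1 hx)
    have hperp : ⟪perp v, a⟫ + ⟪perp v, b₀⟫ = ⟪perp v, a₀⟫ + ⟪perp v, b⟫ := by
      rw [← inner_add_right, ← inner_add_right, hab]
    have hle₁ := ha₀max a ha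
    have hle₂ := hb₀min b hb
    rw [mem_singleton, eq_of_mem_upperSet hv ha ha₀ (by linarith)]
  calc #(upperSet A v) + #(lowerSet B v) = #S₁ + #S₂ := by
        rw [card_image_of_injective _ (add_left_injective b₀),
          card_image_of_injective _ (add_right_injective a₀)]
    _ = #(S₁ ∪ S₂) + #(S₁ ∩ S₂) := (card_union_add_card_inter S₁ S₂).symm
    _ ≤ intCard (A + B) + 1 :=
        add_le_add (card_le_card hsub) ((card_le_card hinter).trans (card_singleton _).le)

end UpperLower

section Boundary

variable {A : Finset Pt} {v x : Pt}

lemma mem_upperSet_or_lowerSet_or_maxSet_perp (hv : ‖v‖ = 1) (hA : ¬ Collinear ℝ (A : Set Pt))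
    (hx : x ∈ A) (hxf : x ∈ frontier (convexHull ℝ (A : Set Pt))) :
    x ∈ upperSet A v ∪ lowerSet A v ∪ maxSet A (perp v) ∪ maxSet A (-perp v) := by
  have hnormal := exists_isExtNormal_of_notMem_interior (interior_convexHull_nonempty hA) hxf.2
  by_cases hup : x ∈ upperSet A v
  · simp [hup]
  by_cases hlow : x ∈ lowerSet A v
  · simp [hlow]
  obtain ⟨u₁, hu₁, hn₁, hv₁⟩ : ∃ u ≠ 0, IsExtNormal A u x ∧ ⟪u, v⟫ ≤ 0 := by
    simpa [mem_upperSet_iff, hx, hnormal] using hup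
  obtain ⟨u₂, hu₂, hn₂, hv₂⟩ : ∃ u ≠ 0, IsExtNormal A u x ∧ 0 ≤ ⟪u, v⟫ := by
    simpa [mem_lowerSet_iff, hx, hnormal] using hlow
  obtain ⟨u, hu, hn, huv⟩ := exists_isExtNormal_inner_eq_zero hA hu₁ hn₁ hv₁ hu₂ hn₂ hv₂
  rcases mem_maxSet_perp_or_neg_perp hv hx hu hn huv with h | h <;> simp [h]

lemma bdryCard_le (hv : ‖v‖ = 1) (hA : ¬ Collinear ℝ (A : Set Pt))
    (hvA : NotParallelToSide v A) : bdryCard A ≤ #(upperSet A v) + #(lowerSet A v) + 2 := by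
  have hperp : #(maxSet A (perp v)) ≤ 1 :=
    hvA _ (by rw [norm_perp, hv]) (inner_perp_self v)
  have hperp_neg : #(maxSet A (-perp v)) ≤ 1 :=
    hvA _ (by rw [norm_neg, norm_perp, hv]) (by rw [inner_neg_left, inner_perp_self, neg_zero])
  have h₁ := card_union_le (upperSet A v ∪ lowerSet A v ∪ maxSet A (perp v)) (maxSet A (-perp v))
  have h₂ := card_union_le (upperSet A v ∪ lowerSet A v) (maxSet A (perp v))
  have h₃ := card_union_le (upperSet A v) (lowerSet A v)
  have hbdry := card_le_card fun x hx =>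
    mem_upperSet_or_lowerSet_or_maxSet_perp hv hA (mem_filter.1 hx).1 (mem_filter.1 hx).2
  rw [← bdryCard] at hbdry
  omega

end Boundary

theorem upperlower
    (A B : Finset Pt) (hA : ¬ Collinear ℝ (A : Set Pt)) (hB : ¬ Collinear ℝ (B : Set Pt))
    (v : Pt) (hv : ‖v‖ = 1)
    (hvA : NotParallelToSide v A) (hvB : NotParallelToSide v B)
    (h1 : (upperSet A v).Nonempty) (h2 : (lowerSet A v).Nonempty)
    (h3 : (upperSet B v).Nonempty) (h4 : (lowerSet B v).Nonempty) :
    2 * (intCard (A + B) : ℤ) ≥ (bdryCard A : ℤ) + (bdryCard B : ℤ) - 6 := by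
  have hint : (interior (convexHull ℝ ((A + B : Finset Pt) : Set Pt))).Nonempty := by
    rw [coe_add]
    exact interior_convexHull_add_nonempty (interior_convexHull_nonempty hA)
      (h3.mono (filter_subset _ _))
  have hup := card_upperSet_add_card_lowerSet_le hv hint h1 h4
  have hlow : #(lowerSet A v) + #(upperSet B v) ≤ intCard (A + B) + 1 := by
    simpa only [lowerSet_eq_upperSet_neg, neg_neg] using
      card_upperSet_add_card_lowerSet_le (v := -v) (by rwa [norm_neg]) hint
        (by simpa only [lowerSet_eq_upperSet_neg] using h2)
        (by simpa only [lowerSet_eq_upperSet_neg, neg_neg] using h3)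
  have hbdryA := bdryCard_le hv hA hvA
  have hbdryB := bdryCard_le hv hB hvB
  omega
end
end

section
/- Let A ⊂ ℝ² be a set of three non-collinear points and let B = A + A. Then b_A = 3, i_A = 0, b_B = 6, i_B = 0, i_{A+B} = 1 and b_{A+B} = 9; in particular 2 i_{A+B} < b_A + b_B − 6, while √(2 i_{A+B} + b_{A+B} − 2) = √(2 i_A + b_A − 2) + √(2 i_B + b_B − 2). -/
open scoped Pointwise Classical RealInnerProductSpace

noncomputable section

/-!
Write `A = {b₀, b₁, b₂}` as an affine basis of the plane. The `k`-fold sumset `k • A` is the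
set of points `∑ nᵢ • bᵢ` with `n ∈ ℕ³`, `∑ nᵢ = k`, and affine independence makes these points
pairwise distinct. Its convex hull is the dilated triangle `k • [A]`, and `∑ nᵢ • bᵢ` has
barycentric coordinates `nᵢ / k` there, so it is interior exactly when every `nᵢ` is positive.
Hence `b` and `i` of `k • A` count the compositions of `k` into three parts with and without
a zero part; for `A`, `B = 2 • A` and `A + B = 3 • A` these are `(3, 0)`, `(6, 0)` and `(9, 1)`.
-/

theorem Finset.Nat.image_single_add_antidiagonalTuple (d k : ℕ) :
    univ.image (Pi.single · 1) + antidiagonalTuple d k = antidiagonalTuple d (k + 1) := by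
  ext n
  simp only [mem_add, mem_image, mem_univ, true_and, mem_antidiagonalTuple]
  constructor
  · rintro ⟨-, ⟨i, rfl⟩, m, hm, rfl⟩
    simp [sum_add_distrib, hm, add_comm]
  · intro hn
    obtain ⟨i, -, hi⟩ := exists_ne_zero_of_sum_ne_zero (hn.trans_ne k.succ_ne_zero)
    have hle : Pi.single i 1 ≤ n := fun j => by
      rcases eq_or_ne j i with rfl | hj
      · simpa [Nat.one_le_iff_ne_zero] using hi
      · simp [hj]
    refine ⟨_, ⟨i, rfl⟩, n - Pi.single i 1, ?_, add_tsub_cancel_of_le hle⟩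
    simp only [Pi.sub_apply]
    rw [sum_tsub_distrib _ fun j _ => hle j]
    simp [hn]

theorem Finset.nsmul_image_univ_eq_image_antidiagonalTuple {V : Type*} [AddCommMonoid V]
    [DecidableEq V] {d : ℕ} (b : Fin d → V) (k : ℕ) :
    k • univ.image b = (Nat.antidiagonalTuple d k).image (Fintype.linearCombination ℕ b) := by
  induction k with
  | zero => rw [zero_nsmul, Nat.antidiagonalTuple_zero_right, image_singleton, map_zero, singleton_zero]
  | succ k ih =>
    have himage : univ.image b =
        (univ.image (Pi.single · 1)).image (Fintype.linearCombination ℕ b) := by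
      simp [image_image, Function.comp_def, Fintype.linearCombination_apply_single]
    rw [succ_nsmul', ih, himage, ← image_add, Nat.image_single_add_antidiagonalTuple]

theorem convexHull_nsmul {𝕜 V : Type*} [Field 𝕜] [LinearOrder 𝕜] [IsStrictOrderedRing 𝕜]
    [AddCommGroup V] [Module 𝕜 V] (s : Set V) {k : ℕ} (hk : k ≠ 0) :
    convexHull 𝕜 (k • s) = (k : 𝕜) • convexHull 𝕜 s := by
  induction k, Nat.one_le_iff_ne_zero.2 hk using Nat.le_induction with
  | base => simp
  | succ k hk ih =>
    rw [succ_nsmul, convexHull_add, ih (by omega), Nat.cast_succ,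
      (convex_convexHull 𝕜 s).add_smul k.cast_nonneg zero_le_one, one_smul]

theorem AffineIndependent.injOn_linearCombination_of_sum_eq {𝕜 ι V : Type*} [Ring 𝕜]
    [CharZero 𝕜] [Fintype ι] [AddCommGroup V] [Module 𝕜 V] {b : ι → V}
    (hb : AffineIndependent 𝕜 b) (k : ℕ) :
    Set.InjOn (Fintype.linearCombination ℕ b) {n | ∑ i, n i = k} := by
  intro m hm n hn h
  simp only [Set.mem_ofPred_eq, Fintype.linearCombination_apply,
    ← Nat.cast_smul_eq_nsmul 𝕜] at hm hn h
  funext i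
  exact_mod_cast hb.eq_of_sum_eq_sum (w₁ := fun i => (m i : 𝕜)) (w₂ := fun i => (n i : 𝕜))
    (by exact_mod_cast hm.trans hn.symm) h i (Finset.mem_univ i)

theorem AffineBasis.linearCombination_mem_interior_convexHull_nsmul_iff {ι V : Type*}
    [Fintype ι] [NormedAddCommGroup V] [NormedSpace ℝ V] (b : AffineBasis ι ℝ V) {k : ℕ}
    (hk : k ≠ 0) {n : ι → ℕ} (hn : ∑ i, n i = k) :
    Fintype.linearCombination ℕ b n ∈ interior (convexHull ℝ (k • Set.range b)) ↔
      ∀ i, 0 < n i := by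
  have hk' : (k : ℝ) ≠ 0 := Nat.cast_ne_zero.2 hk
  have hw : ∑ i, (n i : ℝ) / k = 1 := by
    rw [← Finset.sum_div, div_eq_one_iff_eq hk']
    exact_mod_cast hn
  have hcomb : (k : ℝ)⁻¹ • Fintype.linearCombination ℕ b n =
      Finset.univ.affineCombination ℝ b fun i => (n i : ℝ) / k := by
    rw [Finset.univ.affineCombination_eq_linear_combination _ _ hw,
      Fintype.linearCombination_apply, Finset.smul_sum]
    simp [← Nat.cast_smul_eq_nsmul ℝ, smul_smul, div_eq_inv_mul]
  rw [convexHull_nsmul _ hk, interior_smul₀ hk', Set.mem_smul_set_iff_inv_smul_mem₀ hk',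
    b.interior_convexHull, Set.mem_ofPred_eq, hcomb]
  simp only [b.coord_apply_combination_of_mem (Finset.mem_univ _) hw]
  exact forall_congr' fun i => by
    rw [div_pos_iff_of_pos_right (by positivity), Nat.cast_pos]

theorem bdryCard_add_intCard (X : Finset Pt) : bdryCard X + intCard X = X.card := by
  have hclosed : IsClosed (convexHull ℝ (X : Set Pt)) :=
    (X.finite_toSet.isCompact_convexHull (𝕜 := ℝ)).isClosed
  have hfrontier : ∀ x ∈ X, x ∈ frontier (convexHull ℝ (X : Set Pt)) ↔
      x ∉ interior (convexHull ℝ (X : Set Pt)) := fun x hx => by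
    rw [frontier, hclosed.closure_eq, Set.mem_sdiff]
    exact and_iff_right (subset_convexHull ℝ (X : Set Pt) hx)
  rw [bdryCard, intCard, Finset.filter_congr hfrontier, Finset.filter_not,
    Finset.card_sdiff_add_card_eq_card (Finset.filter_subset _ _)]

section
variable {d : ℕ} (b : AffineBasis (Fin d) ℝ Pt)

theorem intCard_nsmul_image {k : ℕ} (hk : k ≠ 0) :
    intCard (k • Finset.univ.image b) =
      ((Finset.Nat.antidiagonalTuple d k).filter fun n => ∀ i, 0 < n i).card := by
  have hhull : ((k • Finset.univ.image b : Finset Pt) : Set Pt) = k • Set.range b := by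
    rw [Finset.coe_nsmul, Finset.coe_image, Finset.coe_univ, Set.image_univ]
  rw [intCard, hhull, Finset.nsmul_image_univ_eq_image_antidiagonalTuple, Finset.filter_image,
    Finset.card_image_of_injOn]
  · exact congrArg Finset.card <| Finset.filter_congr fun n hn =>
      b.linearCombination_mem_interior_convexHull_nsmul_iff hk
        (Finset.Nat.mem_antidiagonalTuple.1 hn)
  · exact (b.ind.injOn_linearCombination_of_sum_eq k).mono fun n hn =>
      Finset.Nat.mem_antidiagonalTuple.1 (Finset.mem_filter.1 hn).1

theorem card_nsmul_image (k : ℕ) :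
    (k • Finset.univ.image b).card = (Finset.Nat.antidiagonalTuple d k).card := by
  rw [Finset.nsmul_image_univ_eq_image_antidiagonalTuple, Finset.card_image_of_injOn]
  exact (b.ind.injOn_linearCombination_of_sum_eq k).mono fun n hn =>
    Finset.Nat.mem_antidiagonalTuple.1 hn

theorem bdryCard_nsmul_image {k : ℕ} (hk : k ≠ 0) :
    bdryCard (k • Finset.univ.image b) = (Finset.Nat.antidiagonalTuple d k).card -
      ((Finset.Nat.antidiagonalTuple d k).filter fun n => ∀ i, 0 < n i).card := by
  rw [← card_nsmul_image, ← intCard_nsmul_image b hk, ← bdryCard_add_intCard,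
    Nat.add_sub_cancel]

end

theorem exists_affineBasis_image_eq_of_card_eq_three {A : Finset Pt} (hcard : A.card = 3)
    (hA : ¬ Collinear ℝ (A : Set Pt)) :
    ∃ b : AffineBasis (Fin 3) ℝ Pt, Finset.univ.image b = A := by
  set e := (A.equivFinOfCardEq hcard).symm
  have hrange : Set.range (fun i => (e i : Pt)) = A :=
    (e.surjective.range_comp Subtype.val).trans Subtype.range_coe
  have hind : AffineIndependent ℝ fun i => (e i : Pt) := by
    rw [affineIndependent_iff_not_collinear, hrange]
    exact hA
  have hspan : affineSpan ℝ (Set.range fun i => (e i : Pt)) = ⊤ := by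
    rw [hind.affineSpan_eq_top_iff_card_eq_finrank_add_one]
    simp [finrank_euclideanSpace]
  refine ⟨⟨_, hind, hspan⟩, Finset.coe_injective ?_⟩
  rw [Finset.coe_image, Finset.coe_univ, Set.image_univ]
  exact hrange

theorem triangle_double_example
    (A : Finset Pt) (hcard : A.card = 3) (hA : ¬ Collinear ℝ (A : Set Pt))
    (B : Finset Pt) (hB : B = A + A) :
    bdryCard A = 3 ∧ intCard A = 0 ∧
      bdryCard B = 6 ∧ intCard B = 0 ∧
      intCard (A + B) = 1 ∧ bdryCard (A + B) = 9 ∧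
      2 * (intCard (A + B) : ℤ) < (bdryCard A : ℤ) + (bdryCard B : ℤ) - 6 ∧
      Real.sqrt (2 * (intCard (A + B) : ℝ) + (bdryCard (A + B) : ℝ) - 2) =
        Real.sqrt (2 * (intCard A : ℝ) + (bdryCard A : ℝ) - 2) +
          Real.sqrt (2 * (intCard B : ℝ) + (bdryCard B : ℝ) - 2) := by
  obtain ⟨b, rfl⟩ := exists_affineBasis_image_eq_of_card_eq_three hcard hA
  have hA1 : Finset.univ.image b = 1 • Finset.univ.image b := (one_nsmul _).symm
  have hB2 : B = 2 • Finset.univ.image b := by rw [hB, two_nsmul]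
  have hAB3 : Finset.univ.image b + B = 3 • Finset.univ.image b := by
    rw [hB2, ← succ_nsmul']
  have hbA : bdryCard (Finset.univ.image b) = 3 := by
    rw [hA1, bdryCard_nsmul_image b one_ne_zero]; decide
  have hiA : intCard (Finset.univ.image b) = 0 := by
    rw [hA1, intCard_nsmul_image b one_ne_zero]; decide
  have hbB : bdryCard B = 6 := by rw [hB2, bdryCard_nsmul_image b two_ne_zero]; decide
  have hiB : intCard B = 0 := by rw [hB2, intCard_nsmul_image b two_ne_zero]; decide
  have hbAB : bdryCard (Finset.univ.image b + B) = 9 := by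
    rw [hAB3, bdryCard_nsmul_image b three_ne_zero]; decide
  have hiAB : intCard (Finset.univ.image b + B) = 1 := by
    rw [hAB3, intCard_nsmul_image b three_ne_zero]; decide
  refine ⟨hbA, hiA, hbB, hiB, hiAB, hbAB, ?_, ?_⟩ <;>
    simp only [hbA, hiA, hbB, hiB, hbAB, hiAB] <;> norm_num
end
end
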